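/- With p₁, p₂ ∈ ℚ[a, c] obtained by substituting N = 2 into the two explicit polynomials p₁(N, a, c) and p₂(N, a, c) (as in the previous item), the Hilbert series of the graded quotient ℚ[a, c]/(p₁, p₂), where deg a = 1 and deg c = 2, equals 1 + t + 2t² + 2t³ + 3t⁴ + 3t⁵ + 4t⁶ + 4t⁷ + 5t⁸ + 4t⁹ + 4t¹⁰ + 3t¹¹ + 3t¹² + 2t¹³ + 2t¹⁴ + t¹⁵ + t¹⁶. -/

import Mathlib

open MvPolynomial

noncomputable section

/-- The variable `a`, of weighted degree 1. -/
def a : MvPolynomial (Fin 2) ℚ := X 0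

/-- The variable `c`, of weighted degree 2. -/
def c : MvPolynomial (Fin 2) ℚ := X 1

/-- The grading weights: `deg a = 1`, `deg c = 2`. -/
def w : Fin 2 → ℕ := ![1, 2]

/-- The first relation polynomial `p₁(N, a, c)`. -/
def p1 (N : ℚ) : MvPolynomial (Fin 2) ℚ :=
  C (1620*N - 1296) * a^9
  + C (-19440*N^3 + 46656*N^2 - 35244*N + 8289) * a^7 * c
  + C (40824*N^5 - 163296*N^4 + 246708*N^3 - 174069*N^2 + 56478*N - 6584) * a^5 * c^2
  + C (-19440*N^7 + 108864*N^6 - 246708*N^5 + 290115*N^4 - 188260*N^3 + 65840*N^2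
      - 11038*N + 631) * a^3 * c^3
  + C (1620*N^9 - 11664*N^8 + 35244*N^7 - 58023*N^6 + 56478*N^5 - 32920*N^4
      + 11038*N^3 - 1893*N^2 + 120*N) * a * c^4

/-- The second relation polynomial `p₂(N, a, c)`. -/
def p2 (N : ℚ) : MvPolynomial (Fin 2) ℚ :=
  C 324 * a^10
  + C (-14580*N^2 + 23328*N - 8811) * a^8 * c
  + C (68040*N^4 - 217728*N^3 + 246708*N^2 - 116046*N + 18826) * a^6 * c^2
  + C (-68040*N^6 + 326592*N^5 - 616770*N^4 + 580230*N^3 - 282390*N^2 + 65840*N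
      - 5519) * a^4 * c^3
  + C (14580*N^8 - 93312*N^7 + 246708*N^6 - 348138*N^5 + 282390*N^4 - 131680*N^3
      + 33114*N^2 - 3786*N + 120) * a^2 * c^4
  + C (-324*N^10 + 2592*N^9 - 8811*N^8 + 16578*N^7 - 18826*N^6 + 13168*N^5
      - 5519*N^4 + 1262*N^3 - 120*N^2) * c^5

/-- The degree `i` graded piece of the quotient of `ℚ[a,c]` (weighted grading) by `I`. -/
def piece (I : Ideal (MvPolynomial (Fin 2) ℚ)) (i : ℕ) :
    Submodule ℚ (MvPolynomial (Fin 2) ℚ ⧸ I) :=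
  Submodule.map (Ideal.Quotient.mkₐ ℚ I).toLinearMap
    (weightedHomogeneousSubmodule ℚ w i)

end

/-
The relations are weighted-homogeneous of degrees 9 and 10 and relatively prime: `a ^ 17` lies in
`(p₁, p₂)`, while `a ∤ p₂`. Hence in degrees `i < 9 + 10` a relation `f p₁ + g p₂ = 0` forces
`p₁ ∣ g` with `deg g < 9`, i.e. `f = g = 0`, and the degree-`i` part of `(p₁, p₂)` has dimension
`r (i - 9) + r (i - 10)`, where `r n = n / 2 + 1` counts the monomials `a ^ j c ^ k` of degree `n`.
So the quotient has dimension `r i - r (i - 9) - r (i - 10)` in degree `i ≤ 18`. This vanishes for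
`i = 17, 18`, hence in every higher degree, since `ℚ[a, c]` is generated in degrees 1 and 2.
-/

lemma isRelPrime_of_prime_pow_mem_span_pair {R : Type*} [CommRing R] [IsDomain R] {x p q : R}
    (hx : Prime x) {n : ℕ} (hn : x ^ n ∈ Ideal.span {p, q}) (hq : ¬x ∣ q) : IsRelPrime p q := by
  intro d hdp hdq
  obtain ⟨u, v, huv⟩ := Ideal.mem_span_pair.mp hn
  have hdx : d ∣ x ^ n := huv ▸ dvd_add (dvd_mul_of_dvd_right hdp u) (dvd_mul_of_dvd_right hdq v)
  obtain ⟨k, -, hk⟩ := (dvd_prime_pow hx n).mp hdx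
  rcases k with _ | k
  · exact associated_one_iff_isUnit.mp (by simpa using hk)
  · exact absurd ((dvd_pow_self x k.succ_ne_zero).trans (hk.symm.dvd.trans hdq)) hq

section GradedSpanPair

open DirectSum

variable {K A : Type*} [Field K] [CommRing A] [Algebra K A] (𝒜 : ℕ → Submodule K A)

/-- `𝒜 (i - d)`, with the truncated subtraction made harmless: `⊥` when `i < d`. -/
def multiplierSpace (d i : ℕ) : Submodule K A := if d ≤ i then 𝒜 (i - d) else ⊥

variable {𝒜} {d e : ℕ} {p q : A}

instance [∀ n, FiniteDimensional K (𝒜 n)] (d i : ℕ) :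
    FiniteDimensional K (multiplierSpace 𝒜 d i) := by
  unfold multiplierSpace
  by_cases h : d ≤ i
  · rw [if_pos h]; infer_instance
  · rw [if_neg h]; infer_instance

lemma finrank_multiplierSpace (d i : ℕ) : Module.finrank K (multiplierSpace 𝒜 d i) =
    if d ≤ i then Module.finrank K (𝒜 (i - d)) else 0 := by
  unfold multiplierSpace
  by_cases h : d ≤ i
  · rw [if_pos h, if_pos h]
  · rw [if_neg h, if_neg h, finrank_bot]

lemma mul_mem_of_mem_multiplierSpace [SetLike.GradedMonoid 𝒜] {i : ℕ} {f : A} (hp : p ∈ 𝒜 d)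
    (hf : f ∈ multiplierSpace 𝒜 d i) : f * p ∈ 𝒜 i := by
  unfold multiplierSpace at hf
  split_ifs at hf with h
  · simpa [Nat.sub_add_cancel h] using SetLike.mul_mem_graded hf hp
  · simp [(Submodule.mem_bot K).mp hf, zero_mem]

def mulIntoGraded [SetLike.GradedMonoid 𝒜] (i : ℕ) (hp : p ∈ 𝒜 d) :
    multiplierSpace 𝒜 d i →ₗ[K] 𝒜 i :=
  ((LinearMap.mulRight K p).comp (multiplierSpace 𝒜 d i).subtype).codRestrict (𝒜 i)
    fun f => mul_mem_of_mem_multiplierSpace hp f.2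

def spanPairMap [SetLike.GradedMonoid 𝒜] (i : ℕ) (hp : p ∈ 𝒜 d) (hq : q ∈ 𝒜 e) :
    multiplierSpace 𝒜 d i × multiplierSpace 𝒜 e i →ₗ[K] 𝒜 i :=
  (mulIntoGraded i hp).coprod (mulIntoGraded i hq)

lemma spanPairMap_apply [SetLike.GradedMonoid 𝒜] {i : ℕ} (hp : p ∈ 𝒜 d) (hq : q ∈ 𝒜 e)
    (fg : multiplierSpace 𝒜 d i × multiplierSpace 𝒜 e i) :
    (spanPairMap i hp hq fg : A) = fg.1 * p + fg.2 * q := rfl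

lemma exists_mem_multiplierSpace_decompose_mul [GradedAlgebra 𝒜] (i : ℕ) (hp : p ∈ 𝒜 d)
    (u : A) : ∃ f ∈ multiplierSpace 𝒜 d i, (decompose 𝒜 (u * p) i : A) = f * p := by
  rw [coe_decompose_mul_of_right_mem 𝒜 i hp]
  unfold multiplierSpace
  split_ifs with h
  · exact ⟨_, Submodule.coe_mem _, rfl⟩
  · exact ⟨0, zero_mem _, (zero_mul p).symm⟩

lemma range_spanPairMap [GradedAlgebra 𝒜] (i : ℕ) (hp : p ∈ 𝒜 d) (hq : q ∈ 𝒜 e) :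
    LinearMap.range (spanPairMap i hp hq) =
      LinearMap.ker ((Ideal.Quotient.mkₐ K (Ideal.span {p, q})).toLinearMap ∘ₗ (𝒜 i).subtype) := by
  ext x
  simp only [LinearMap.mem_range, LinearMap.mem_ker, LinearMap.comp_apply,
    Submodule.subtype_apply, AlgHom.toLinearMap_apply, Ideal.Quotient.mkₐ_eq_mk,
    Ideal.Quotient.eq_zero_iff_mem]
  constructor
  · rintro ⟨⟨f, g⟩, rfl⟩
    exact Ideal.mem_span_pair.mpr ⟨f, g, rfl⟩
  · intro hx
    obtain ⟨u, v, huv⟩ := Ideal.mem_span_pair.mp hx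
    obtain ⟨f, hf, hfu⟩ := exists_mem_multiplierSpace_decompose_mul i hp u
    obtain ⟨g, hg, hgv⟩ := exists_mem_multiplierSpace_decompose_mul i hq v
    refine ⟨(⟨f, hf⟩, ⟨g, hg⟩), Subtype.ext ?_⟩
    rw [spanPairMap_apply, ← hfu, ← hgv, ← AddMemClass.coe_add, ← DirectSum.add_apply,
      ← decompose_add, huv, decompose_coe, of_eq_same]

lemma eq_zero_of_mem_multiplierSpace_of_dvd [GradedAlgebra 𝒜] {i : ℕ} (hi : i < d + e) {g : A}
    (hp : p ∈ 𝒜 d) (hg : g ∈ multiplierSpace 𝒜 e i) (hpg : p ∣ g) : g = 0 := by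
  obtain ⟨h, rfl⟩ := hpg
  unfold multiplierSpace at hg
  split_ifs at hg with hei
  · rw [← decompose_of_mem_same 𝒜 hg, coe_decompose_mul_of_left_mem_of_not_le 𝒜 hp (by omega)]
  · exact (Submodule.mem_bot K).mp hg

lemma spanPairMap_injective [GradedAlgebra 𝒜] [IsDomain A] [DecompositionMonoid A] {i : ℕ}
    (hi : i < d + e) (hp : p ∈ 𝒜 d) (hq : q ∈ 𝒜 e) (hp0 : p ≠ 0) (hpq : IsRelPrime p q) :
    Function.Injective (spanPairMap i hp hq) := by
  rw [← LinearMap.ker_eq_bot, LinearMap.ker_eq_bot']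
  rintro ⟨⟨f, hf⟩, ⟨g, hg⟩⟩ h
  have hsum : f * p + g * q = 0 := congrArg Subtype.val h
  have hg0 : g = 0 := by
    refine eq_zero_of_mem_multiplierSpace_of_dvd hi hp hg (hpq.dvd_of_dvd_mul_left ?_)
    exact ⟨-f, by linear_combination hsum⟩
  have hf0 : f = 0 := by simpa [hg0, hp0] using hsum
  simp [hf0, hg0]

theorem finrank_map_mkₐ_span_pair_add [GradedAlgebra 𝒜] [∀ n, FiniteDimensional K (𝒜 n)]
    [IsDomain A] [DecompositionMonoid A] {i : ℕ} (hi : i < d + e) (hp : p ∈ 𝒜 d) (hq : q ∈ 𝒜 e)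
    (hp0 : p ≠ 0) (hpq : IsRelPrime p q) :
    Module.finrank K ((𝒜 i).map (Ideal.Quotient.mkₐ K (Ideal.span {p, q})).toLinearMap)
      + Module.finrank K (multiplierSpace 𝒜 d i) + Module.finrank K (multiplierSpace 𝒜 e i)
      = Module.finrank K (𝒜 i) := by
  have h := LinearMap.finrank_range_add_finrank_ker
    ((Ideal.Quotient.mkₐ K (Ideal.span {p, q})).toLinearMap ∘ₗ (𝒜 i).subtype)
  rwa [LinearMap.range_comp, Submodule.range_subtype, ← range_spanPairMap i hp hq,
    LinearMap.finrank_range_of_inj (spanPairMap_injective hi hp hq hp0 hpq), Module.finrank_prod,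
    ← add_assoc] at h

end GradedSpanPair

section WeightsOneTwo

variable {K : Type*} [Field K]

lemma weight_w_apply (v : Fin 2 →₀ ℕ) : Finsupp.weight w v = v 0 + 2 * v 1 := by
  simp [Finsupp.weight_apply, Finsupp.sum_fintype, w, mul_comm]

noncomputable def weightEquiv (n : ℕ) :
    {v : Fin 2 →₀ ℕ | Finsupp.weight w v = n} ≃ Fin (n / 2 + 1) where
  toFun v := ⟨v.1 1, by have := v.2; simp only [Set.mem_ofPred_eq, weight_w_apply] at this; omega⟩
  invFun k := ⟨Finsupp.equivFunOnFinite.symm ![n - 2 * k, k], by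
    simp only [Set.mem_ofPred_eq, weight_w_apply, Finsupp.equivFunOnFinite_symm_apply_apply,
      Matrix.cons_val_zero, Matrix.cons_val_one, Matrix.cons_val_fin_one]
    omega⟩
  left_inv v := by
    have := v.2
    simp only [Set.mem_ofPred_eq, weight_w_apply] at this
    ext i
    fin_cases i <;> simp only [Fin.zero_eta, Fin.mk_one, Finsupp.equivFunOnFinite_symm_apply_apply,
      Matrix.cons_val_zero, Matrix.cons_val_one, Matrix.cons_val_fin_one]
    omega
  right_inv k := by ext; simp

lemma finrank_weightedHomogeneousSubmodule_w (n : ℕ) :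
    Module.finrank K (weightedHomogeneousSubmodule K w n) = n / 2 + 1 := by
  rw [weightedHomogeneousSubmodule_eq_finsupp_supported,
    (AddMonoidAlgebra.supportedEquivFinsupp _).finrank_eq,
    (Finsupp.domLCongr (weightEquiv n)).finrank_eq, Module.finrank_finsupp_self, Fintype.card_fin]

instance (n : ℕ) : FiniteDimensional K (weightedHomogeneousSubmodule K w n) :=
  Module.finite_of_finrank_pos (by rw [finrank_weightedHomogeneousSubmodule_w]; omega)

lemma monomial_mem_of_le_weight {I : Ideal (MvPolynomial (Fin 2) K)} {n : ℕ}
    (h₀ : weightedHomogeneousSubmodule K w n ≤ I.restrictScalars K)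
    (h₁ : weightedHomogeneousSubmodule K w (n + 1) ≤ I.restrictScalars K)
    {v : Fin 2 →₀ ℕ} (hv : n ≤ Finsupp.weight w v) : monomial v (1 : K) ∈ I := by
  induction hm : Finsupp.weight w v using Nat.strong_induction_on generalizing v with
  | _ m ih =>
  rcases Nat.lt_or_ge m (n + 2) with hlt | hge
  · have hmem : monomial v (1 : K) ∈ weightedHomogeneousSubmodule K w m :=
      isWeightedHomogeneous_monomial w v 1 hm
    rcases (show m = n ∨ m = n + 1 by omega) with rfl | rfl
    exacts [h₀ hmem, h₁ hmem]
  · obtain ⟨i, hiv, hin, hi0⟩ : ∃ i, Finsupp.single i 1 ≤ v ∧ n + w i ≤ m ∧ 0 < w i := by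
      rw [weight_w_apply] at hm
      by_cases h0 : 1 ≤ v 0
      · exact ⟨0, Finsupp.single_le_iff.mpr h0, by simp [w]; omega, by simp [w]⟩
      · exact ⟨1, Finsupp.single_le_iff.mpr (by omega), by simp [w]; omega, by simp [w]⟩
    have hw : Finsupp.weight w (v - Finsupp.single i 1) + w i = m := by
      conv_rhs => rw [← hm, ← tsub_add_cancel_of_le hiv]
      rw [map_add, Finsupp.weight_single, one_smul]
    rw [← tsub_add_cancel_of_le hiv, monomial_add_single, pow_one]
    exact I.mul_mem_right _ (ih _ (by omega) (by omega) rfl)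

lemma weightedHomogeneousSubmodule_w_le_ideal_of_le {I : Ideal (MvPolynomial (Fin 2) K)} {n : ℕ}
    (h₀ : weightedHomogeneousSubmodule K w n ≤ I.restrictScalars K)
    (h₁ : weightedHomogeneousSubmodule K w (n + 1) ≤ I.restrictScalars K) {m : ℕ} (hm : n ≤ m) :
    weightedHomogeneousSubmodule K w m ≤ I.restrictScalars K := by
  intro x hx
  rw [Submodule.restrictScalars_mem, x.as_sum]
  refine Ideal.sum_mem _ fun v hv => ?_
  have hvm : Finsupp.weight w v = m := hx (mem_support_iff.mp hv)
  rw [← mul_one (coeff v x), ← C_mul_monomial]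
  exact I.mul_mem_left _ (monomial_mem_of_le_weight h₀ h₁ (hvm ▸ hm))

end WeightsOneTwo

lemma isWeightedHomogeneous_a : IsWeightedHomogeneous w a 1 := isWeightedHomogeneous_X ℚ w 0

lemma isWeightedHomogeneous_c : IsWeightedHomogeneous w c 2 := isWeightedHomogeneous_X ℚ w 1

lemma p1_mem_weightedHomogeneousSubmodule (N : ℚ) : p1 N ∈ weightedHomogeneousSubmodule ℚ w 9 := by
  have hC := fun r : ℚ => isWeightedHomogeneous_C w r
  have ha := isWeightedHomogeneous_a
  have hc := isWeightedHomogeneous_c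
  rw [mem_weightedHomogeneousSubmodule, p1]
  refine .add (.add (.add (.add ?_ ?_) ?_) ?_) ?_
  · convert (hC _).mul (ha.pow 9); norm_num
  · convert ((hC _).mul (ha.pow 7)).mul hc; norm_num
  · convert ((hC _).mul (ha.pow 5)).mul (hc.pow 2); norm_num
  · convert ((hC _).mul (ha.pow 3)).mul (hc.pow 3); norm_num
  · convert ((hC _).mul ha).mul (hc.pow 4); norm_num

lemma p2_mem_weightedHomogeneousSubmodule (N : ℚ) : p2 N ∈ weightedHomogeneousSubmodule ℚ w 10 := by
  have hC := fun r : ℚ => isWeightedHomogeneous_C w r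
  have ha := isWeightedHomogeneous_a
  have hc := isWeightedHomogeneous_c
  rw [mem_weightedHomogeneousSubmodule, p2]
  refine .add (.add (.add (.add (.add ?_ ?_) ?_) ?_) ?_) ?_
  · convert (hC _).mul (ha.pow 10); norm_num
  · convert ((hC _).mul (ha.pow 8)).mul hc; norm_num
  · convert ((hC _).mul (ha.pow 6)).mul (hc.pow 2); norm_num
  · convert ((hC _).mul (ha.pow 4)).mul (hc.pow 3); norm_num
  · convert ((hC _).mul (ha.pow 2)).mul (hc.pow 4); norm_num
  · convert (hC _).mul (hc.pow 5); norm_num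

lemma a_pow_mem_span_p1_p2 : a ^ 17 ∈ Ideal.span {p1 2, p2 2} := by
  -- cofactors found by solving `u p₁ + v p₂ = a ^ 17` over ℚ, denominators cleared
  have cert : (1097656960720320000 : MvPolynomial (Fin 2) ℚ) * a ^ 17 =
      (52626650327520 * c ^ 4 - 2979950403593036 * a ^ 2 * c ^ 3 + 14238029194003139 * a ^ 4 * c ^ 2
        - 11348397562879409 * a ^ 6 * c + 968395292809596 * a ^ 8) * p1 2
      + (303041794802636 * a * c ^ 3 - 4126225215886529 * a ^ 3 * c ^ 2
        + 7938261091947809 * a ^ 5 * c - 2422541631177576 * a ^ 7) * p2 2 := by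
    simp only [p1, p2]
    norm_num [map_ofNat]
    ring
  have h := Ideal.mul_mem_left _ (C (1097656960720320000 : ℚ)⁻¹)
    (Ideal.mem_span_pair.mpr ⟨_, _, cert.symm⟩)
  rwa [← mul_assoc, ← map_ofNat C, ← C_mul, inv_mul_cancel₀ (by norm_num), C_1, one_mul] at h

lemma p1_two_ne_zero : p1 2 ≠ 0 := by
  intro h
  have := congrArg (eval ![1, 1]) h
  norm_num [p1, a, c] at this

lemma not_a_dvd_p2_two : ¬a ∣ p2 2 := by
  rintro ⟨r, hr⟩
  have := congrArg (eval ![0, 1]) hr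
  norm_num [p2, a, c] at this

lemma isRelPrime_p1_p2 : IsRelPrime (p1 2) (p2 2) :=
  isRelPrime_of_prime_pow_mem_span_pair (by exact X_prime) a_pow_mem_span_p1_p2 not_a_dvd_p2_two

lemma piece_eq_bot_iff {I : Ideal (MvPolynomial (Fin 2) ℚ)} {i : ℕ} :
    piece I i = ⊥ ↔ weightedHomogeneousSubmodule ℚ w i ≤ I.restrictScalars ℚ := by
  rw [piece, eq_bot_iff, Submodule.map_le_iff_le_comap]
  refine forall₂_congr fun x _ => ?_
  simp [Ideal.Quotient.eq_zero_iff_mem]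

instance (I : Ideal (MvPolynomial (Fin 2) ℚ)) (i : ℕ) : FiniteDimensional ℚ (piece I i) := by
  unfold piece; infer_instance

section

attribute [local instance] MvPolynomial.weightedGradedAlgebra

lemma finrank_piece_span_p1_p2 {i : ℕ} (hi : i < 19) :
    Module.finrank ℚ (piece (Ideal.span {p1 2, p2 2}) i) = i / 2 + 1
      - (if 9 ≤ i then (i - 9) / 2 + 1 else 0) - (if 10 ≤ i then (i - 10) / 2 + 1 else 0) := by
  have h := finrank_map_mkₐ_span_pair_add hi (p1_mem_weightedHomogeneousSubmodule 2)
    (p2_mem_weightedHomogeneousSubmodule 2) p1_two_ne_zero isRelPrime_p1_p2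
  simp only [finrank_multiplierSpace, finrank_weightedHomogeneousSubmodule_w] at h
  unfold piece
  omega

end

lemma weightedHomogeneousSubmodule_le_span_p1_p2 {i : ℕ} (h17 : 17 ≤ i) (h18 : i ≤ 18) :
    weightedHomogeneousSubmodule ℚ w i ≤ (Ideal.span {p1 2, p2 2}).restrictScalars ℚ := by
  rw [← piece_eq_bot_iff, ← Submodule.finrank_eq_zero, finrank_piece_span_p1_p2 (by omega)]
  interval_cases i <;> rfl

lemma piece_span_p1_p2_eq_bot {i : ℕ} (hi : 17 ≤ i) : piece (Ideal.span {p1 2, p2 2}) i = ⊥ :=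
  piece_eq_bot_iff.mpr <| weightedHomogeneousSubmodule_w_le_ideal_of_le
    (weightedHomogeneousSubmodule_le_span_p1_p2 (i := 17) le_rfl (by norm_num))
    (weightedHomogeneousSubmodule_le_span_p1_p2 (i := 17 + 1) (by norm_num) le_rfl) hi

/-- The Hilbert series of `ℚ[a,c]/(p₁(2), p₂(2))` is
`1 + t + 2t² + 2t³ + 3t⁴ + 3t⁵ + 4t⁶ + 4t⁷ + 5t⁸ + 4t⁹ + 4t¹⁰ + 3t¹¹ + 3t¹² + 2t¹³
  + 2t¹⁴ + t¹⁵ + t¹⁶`. -/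
theorem stmt_6 (i : ℕ) :
    Module.finrank ℚ (piece (Ideal.span {p1 2, p2 2}) i) =
      [1, 1, 2, 2, 3, 3, 4, 4, 5, 4, 4, 3, 3, 2, 2, 1, 1].getD i 0 := by
  rcases Nat.lt_or_ge i 17 with hi | hi
  · rw [finrank_piece_span_p1_p2 (by omega)]
    interval_cases i <;> rfl
  · rw [piece_span_p1_p2_eq_bot hi, finrank_bot, List.getD_eq_default _ _ (by simpa using hi)]
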